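/- arXiv:0907.3391 — 9 statements merged into one kernel-verified Lean document; each statement's English description precedes it below -/
import Mathlib

section
/- Let (A,≺,≻) be a pre-alternative algebra over a field k of characteristic ≠ 2. Then the product x∘y = x≺y + x≻y defines an alternative algebra structure on A (called the associated alternative algebra As(A)); i.e., (x∘x)∘y = x∘(x∘y) and (y∘x)∘x = y∘(x∘x) for all x,y ∈ A. -/
open TensorProduct

universe u v w

variable {k : Type u} [Field k]

section Defs

variable {M : Type v} {V : Type w} [AddCommGroup M] [Module k M] [AddCommGroup V] [Module k V]

/-- Alternative algebra: both alternative laws. -/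
def IsAlt (m : M →ₗ[k] M →ₗ[k] M) : Prop :=
  (∀ x y : M, m (m x x) y = m x (m x y)) ∧ (∀ x y : M, m (m y x) x = m y (m x x))

/-- right associator -/
def rAssoc (p s : M →ₗ[k] M →ₗ[k] M) (x y z : M) : M :=
  p (p x y) z - p x (p y z + s y z)

/-- middle associator -/
def mAssoc (p s : M →ₗ[k] M →ₗ[k] M) (x y z : M) : M :=
  p (s x y) z - s x (p y z)

/-- left associator -/
def lAssoc (p s : M →ₗ[k] M →ₗ[k] M) (x y z : M) : M :=
  s (p x y + s x y) z - s x (s y z)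

/-- Pre-alternative algebra. -/
def IsPreAlt (p s : M →ₗ[k] M →ₗ[k] M) : Prop :=
  (∀ x y z : M, mAssoc p s x y z + rAssoc p s y x z = 0) ∧
  (∀ x y z : M, mAssoc p s x y z + lAssoc p s x z y = 0) ∧
  (∀ x y : M, rAssoc p s y x x = 0) ∧
  (∀ x y : M, lAssoc p s x x y = 0)

/-- Bimodule of an alternative algebra. -/
def IsAltBimod (m : M →ₗ[k] M →ₗ[k] M) (L R : M →ₗ[k] Module.End k V) : Prop :=
  (∀ x : M, L (m x x) = L x * L x) ∧
  (∀ x : M, R (m x x) = R x * R x) ∧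
  (∀ x y : M, R y * L x - L x * R y = R (m x y) - R y * R x) ∧
  (∀ x y : M, L (m y x) - L y * L x = L y * R x - R x * L y)

/-- Bimodule of a pre-alternative algebra. -/
def IsPreAltBimod (p s : M →ₗ[k] M →ₗ[k] M) (Lp Rp Ls Rs : M →ₗ[k] Module.End k V) : Prop :=
  (∀ x y : M, Ls ((p x y + s x y) + (p y x + s y x)) = Ls x * Ls y + Ls y * Ls x) ∧
  (∀ x y : M, Rs y * ((Lp x + Ls x) + (Rp x + Rs x)) = Ls x * Rs y + Rs (s x y)) ∧
  (∀ x y : M, Rp y * Ls x + Rp y * Rp x = Ls x * Rp y + Rp (p x y + s x y)) ∧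
  (∀ x y : M, Rp y * Rs x + Rp y * Lp x = Rs (p x y) + Lp x * (Rp y + Rs y)) ∧
  (∀ x y : M, Lp (s x y) + Lp (p y x) = Ls x * Lp y + Lp y * (Lp x + Ls x)) ∧
  (∀ x y : M, Ls (p y x + s y x) + Rp x * Ls y = Ls y * Ls x + Ls y * Rp x) ∧
  (∀ x y : M, Rs y * (Rp x + Rs x) + Rp x * Rs y = Rs (s x y) + Rs (p y x)) ∧
  (∀ x y : M, Rs x * (Lp y + Ls y) + Lp (s y x) = Ls y * Rs x + Ls y * Lp x) ∧
  (∀ x y : M, Rp y * Rp x + Rp x * Rp y = Rp ((p x y + s x y) + (p y x + s y x))) ∧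
  (∀ x y : M, Rp y * Lp x + Lp (p x y) = Lp x * ((Rp y + Rs y) + (Lp y + Ls y)))

/-- Dual family of endomorphisms: `(dualT L) x = (L x)^*`. -/
noncomputable def dualT (L : M →ₗ[k] Module.End k V) :
    M →ₗ[k] Module.End k (Module.Dual k V) :=
  (Module.Dual.transpose (R := k) (M := V) (M' := V)) ∘ₗ L

/-- The linear map `A* → A` associated to an element of `A ⊗ A`:
`⟨u* ⊗ v*, r⟩ = ⟨u*, T_r v*⟩`, i.e. `T_r(v*) = Σ v*(bᵢ) • aᵢ`. -/
noncomputable def Tr : (M ⊗[k] M) →ₗ[k] Module.Dual k M →ₗ[k] M :=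
  TensorProduct.lift (LinearMap.mk₂ k
    (fun a b => (Module.Dual.eval k M b).smulRight a)
    (fun a a' b => by ext f; simp)
    (fun c a b => by ext f; simp only [LinearMap.smulRight_apply, LinearMap.smul_apply,
      Module.Dual.eval_apply]; exact smul_comm _ _ _)
    (fun a b b' => by ext f; simp [add_smul])
    (fun c a b => by ext f; simp [map_smul, mul_smul]))

noncomputable def tlift (m : M →ₗ[k] M →ₗ[k] M) : M ⊗[k] M →ₗ[k] M := TensorProduct.lift m

/-- `r₁₂ ⋄ r₁₃` : `(a⊗b)⊗(c⊗d) ↦ (a⋄c)⊗b⊗d`. -/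
noncomputable def comp12_13 (m : M →ₗ[k] M →ₗ[k] M) :
    (M ⊗[k] M) ⊗[k] (M ⊗[k] M) →ₗ[k] M ⊗[k] (M ⊗[k] M) :=
  (TensorProduct.map (tlift m) LinearMap.id) ∘ₗ
    (TensorProduct.tensorTensorTensorComm k M M M M).toLinearMap

/-- `r₁₃ ⋄ r₁₂` : `(a⊗b)⊗(c⊗d) ↦ (a⋄c)⊗d⊗b`. -/
noncomputable def comp13_12 (m : M →ₗ[k] M →ₗ[k] M) :
    (M ⊗[k] M) ⊗[k] (M ⊗[k] M) →ₗ[k] M ⊗[k] (M ⊗[k] M) :=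
  (TensorProduct.map (tlift m) (TensorProduct.comm k M M).toLinearMap) ∘ₗ
    (TensorProduct.tensorTensorTensorComm k M M M M).toLinearMap

/-- `r₁₂ ⋄ r₂₃` : `(a⊗b)⊗(c⊗d) ↦ a⊗(b⋄c)⊗d`. -/
noncomputable def comp12_23 (m : M →ₗ[k] M →ₗ[k] M) :
    (M ⊗[k] M) ⊗[k] (M ⊗[k] M) →ₗ[k] M ⊗[k] (M ⊗[k] M) :=
  (TensorProduct.map LinearMap.id
      ((TensorProduct.map (tlift m) LinearMap.id) ∘ₗ
        (TensorProduct.assoc k M M M).symm.toLinearMap)) ∘ₗ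
    (TensorProduct.assoc k M M (M ⊗[k] M)).toLinearMap

/-- `r₂₃ ⋄ r₁₂` : `(a⊗b)⊗(c⊗d) ↦ c⊗(a⋄d)⊗b`. -/
noncomputable def comp23_12 (m : M →ₗ[k] M →ₗ[k] M) :
    (M ⊗[k] M) ⊗[k] (M ⊗[k] M) →ₗ[k] M ⊗[k] (M ⊗[k] M) :=
  (TensorProduct.map LinearMap.id
      ((TensorProduct.map (tlift m.flip) LinearMap.id) ∘ₗ
        (TensorProduct.assoc k M M M).symm.toLinearMap)) ∘ₗ
    (TensorProduct.assoc k M M (M ⊗[k] M)).toLinearMap ∘ₗ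
    (TensorProduct.comm k (M ⊗[k] M) (M ⊗[k] M)).toLinearMap

/-- `r₁₃ ⋄ r₂₃` : `(a⊗b)⊗(c⊗d) ↦ a⊗c⊗(b⋄d)`. -/
noncomputable def comp13_23 (m : M →ₗ[k] M →ₗ[k] M) :
    (M ⊗[k] M) ⊗[k] (M ⊗[k] M) →ₗ[k] M ⊗[k] (M ⊗[k] M) :=
  (TensorProduct.map LinearMap.id (TensorProduct.map LinearMap.id (tlift m))) ∘ₗ
    (TensorProduct.assoc k M M (M ⊗[k] M)).toLinearMap ∘ₗ
    (TensorProduct.tensorTensorTensorComm k M M M M).toLinearMap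

/-- `r₂₃ ⋄ r₁₃` : `(a⊗b)⊗(c⊗d) ↦ c⊗a⊗(b⋄d)`. -/
noncomputable def comp23_13 (m : M →ₗ[k] M →ₗ[k] M) :
    (M ⊗[k] M) ⊗[k] (M ⊗[k] M) →ₗ[k] M ⊗[k] (M ⊗[k] M) :=
  (TensorProduct.map LinearMap.id (TensorProduct.map LinearMap.id (tlift m))) ∘ₗ
    (TensorProduct.assoc k M M (M ⊗[k] M)).toLinearMap ∘ₗ
    (TensorProduct.map (TensorProduct.comm k M M).toLinearMap LinearMap.id) ∘ₗ
    (TensorProduct.tensorTensorTensorComm k M M M M).toLinearMap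

/-- The alternative Yang–Baxter expression `r₂₃∘r₁₂ − r₁₂∘r₁₃ − r₁₃∘r₂₃`. -/
noncomputable def ayb (m : M →ₗ[k] M →ₗ[k] M) (r : M ⊗[k] M) : M ⊗[k] (M ⊗[k] M) :=
  comp23_12 m (r ⊗ₜ r) - comp12_13 m (r ⊗ₜ r) - comp13_23 m (r ⊗ₜ r)

/-- PA-equations. -/
noncomputable def PA11 (p s : M →ₗ[k] M →ₗ[k] M) (r : M ⊗[k] M) : M ⊗[k] (M ⊗[k] M) :=
  comp12_13 (p + s) (r ⊗ₜ r) - comp23_12 s (r ⊗ₜ r) - comp13_23 p (r ⊗ₜ r)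

noncomputable def PA12 (p s : M →ₗ[k] M →ₗ[k] M) (r : M ⊗[k] M) : M ⊗[k] (M ⊗[k] M) :=
  comp13_12 (p + s) (r ⊗ₜ r) - comp12_23 p (r ⊗ₜ r) - comp23_13 s (r ⊗ₜ r)

noncomputable def PA21 (p s : M →ₗ[k] M →ₗ[k] M) (r : M ⊗[k] M) : M ⊗[k] (M ⊗[k] M) :=
  comp12_23 (p + s) (r ⊗ₜ r) - comp23_13 p (r ⊗ₜ r) - comp13_12 s (r ⊗ₜ r)

noncomputable def PA22 (p s : M →ₗ[k] M →ₗ[k] M) (r : M ⊗[k] M) : M ⊗[k] (M ⊗[k] M) :=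
  comp23_12 (p + s) (r ⊗ₜ r) - comp13_23 s (r ⊗ₜ r) - comp12_13 p (r ⊗ₜ r)

noncomputable def PA31 (p s : M →ₗ[k] M →ₗ[k] M) (r : M ⊗[k] M) : M ⊗[k] (M ⊗[k] M) :=
  comp13_23 (p + s) (r ⊗ₜ r) - comp12_13 s (r ⊗ₜ r) - comp23_12 p (r ⊗ₜ r)

noncomputable def PA32 (p s : M →ₗ[k] M →ₗ[k] M) (r : M ⊗[k] M) : M ⊗[k] (M ⊗[k] M) :=
  comp23_13 (p + s) (r ⊗ₜ r) - comp13_12 p (r ⊗ₜ r) - comp12_23 s (r ⊗ₜ r)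

/-- Semidirect sum product on `M × V` for an alternative algebra `M` and a bimodule `(V,L,R)`. -/
def sd (m : M →ₗ[k] M →ₗ[k] M) (L R : M →ₗ[k] Module.End k V) :
    (M × V) →ₗ[k] (M × V) →ₗ[k] (M × V) :=
  LinearMap.mk₂ k (fun x y => (m x.1 y.1, L x.1 y.2 + R y.1 x.2))
    (fun x x' y => by refine Prod.ext ?_ ?_ <;> simp [map_add] <;> abel)
    (fun c x y => by refine Prod.ext ?_ ?_ <;> simp [map_smul, smul_add])
    (fun x y y' => by refine Prod.ext ?_ ?_ <;> simp [map_add] <;> abel)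
    (fun c x y => by refine Prod.ext ?_ ?_ <;> simp [map_smul, smul_add])

end Defs

theorem stmt0 {A : Type v} [AddCommGroup A] [Module k A] (hchar : (2 : k) ≠ 0)
    (p s : A →ₗ[k] A →ₗ[k] A) (h : IsPreAlt p s) :
    IsAlt (p + s) := by
  obtain ⟨h1, h2, h3, h4⟩ := h
  have key : ∀ x y z : A, (p + s) ((p + s) x y) z - (p + s) x ((p + s) y z) =
      (mAssoc p s x y z + rAssoc p s x y z) + lAssoc p s x y z := by
    intro x y z
    simp only [rAssoc, mAssoc, lAssoc, LinearMap.add_apply, map_add]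
    abel
  constructor
  · intro x y
    have e := key x x y
    rw [h1 x x y, h4 x y, zero_add] at e
    exact sub_eq_zero.mp e
  · intro x y
    have e : (p + s) ((p + s) y x) x - (p + s) y ((p + s) x x) =
        (mAssoc p s y x x + lAssoc p s y x x) + rAssoc p s y x x := by
      have := key y x x; rw [this]; abel
    rw [h2 y x x, h3 x y, zero_add] at e
    exact sub_eq_zero.mp e
end

section
/- Let (A,≺,≻) be a pre-alternative algebra over a field of characteristic ≠ 2, with associated alternative product x∘y = x≺y + x≻y. Then the linear maps l_≻, r_≺ : A → End(A) defined by l_≻(x)y = x≻y and r_≺(x)y = y≺x make (A, l_≻, r_≺) a bimodule of the alternative algebra (As(A),∘). -/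
open TensorProduct

universe u v w

variable {k : Type u} [Field k]

theorem stmt1 {A : Type v} [AddCommGroup A] [Module k A] (hchar : (2 : k) ≠ 0)
    (p s : A →ₗ[k] A →ₗ[k] A) (h : IsPreAlt p s) :
    IsAltBimod (p + s) (s : A →ₗ[k] Module.End k A)
      ((p.flip : A →ₗ[k] A →ₗ[k] A) : A →ₗ[k] Module.End k A) := by
  obtain ⟨h1, h2, h3, h4⟩ := h
  refine ⟨fun x => ?_, fun x => ?_, fun x y => ?_, fun x y => ?_⟩
  · ext v
    have := h4 x v
    simp only [lAssoc, sub_eq_zero] at this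
    simpa [Module.End.mul_apply] using this
  · ext v
    have := h3 x v
    simp only [rAssoc, sub_eq_zero] at this
    simpa [Module.End.mul_apply] using this.symm
  · ext v
    have := h1 x v y
    simp only [mAssoc, rAssoc] at this
    simp only [LinearMap.sub_apply, LinearMap.add_apply, Module.End.mul_apply,
      LinearMap.flip_apply]
    linear_combination (norm := module) this
  · ext v
    have := h2 y v x
    simp only [mAssoc, lAssoc] at this
    simp only [LinearMap.sub_apply, LinearMap.add_apply, Module.End.mul_apply,
      LinearMap.flip_apply]
    linear_combination (norm := module) this
end

section
/- Let (A,∘) be an alternative algebra over a field of characteristic ≠ 2 and let (V,L,R) be a bimodule of (A,∘) with V finite-dimensional. Then (V*, R*, L*) is a bimodule of (A,∘), where V* is the dual space and R*, L* are the dual maps of R, L. -/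
open TensorProduct

universe u v w

variable {k : Type u} [Field k]

section Pf

variable {A : Type v} {V : Type w} [AddCommGroup A] [Module k A]
    [AddCommGroup V] [Module k V]

private lemma transpose_mul (f g : Module.End k V) :
    Module.Dual.transpose (R := k) (f * g)
      = Module.Dual.transpose (R := k) g * Module.Dual.transpose (R := k) f := by
  have : (f * g : Module.End k V) = f.comp g := rfl
  rw [this, Module.Dual.transpose_comp]; rfl

private lemma dualT_apply (L : A →ₗ[k] Module.End k V) (x : A) :
    dualT L x = Module.Dual.transpose (R := k) (L x) := rfl

end Pf

theorem stmt2 {A : Type v} {V : Type w} [AddCommGroup A] [Module k A]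
    [AddCommGroup V] [Module k V] [FiniteDimensional k V] (hchar : (2 : k) ≠ 0)
    (m : A →ₗ[k] A →ₗ[k] A) (halt : IsAlt m) (L R : A →ₗ[k] Module.End k V)
    (hbim : IsAltBimod m L R) :
    IsAltBimod m (dualT R) (dualT L) := by
  obtain ⟨h1, h2, h3, h4⟩ := hbim
  -- linearizations
  have lin1 : ∀ x y : A, L (m x y) + L (m y x) = L x * L y + L y * L x := by
    intro x y
    have h := h1 (x + y)
    simp only [map_add, LinearMap.add_apply] at h
    rw [h1 x, h1 y] at h
    have : L (m x y) + L (m y x) =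
        (L x * L x + L (m y x) + (L (m x y) + L y * L y)) - (L x * L x + L y * L y) := by abel
    rw [this, h]
    noncomm_ring
  have lin2 : ∀ x y : A, R (m x y) + R (m y x) = R x * R y + R y * R x := by
    intro x y
    have h := h2 (x + y)
    simp only [map_add, LinearMap.add_apply] at h
    rw [h2 x, h2 y] at h
    have : R (m x y) + R (m y x) =
        (R x * R x + R (m y x) + (R (m x y) + R y * R y)) - (R x * R x + R y * R y) := by abel
    rw [this, h]
    noncomm_ring
  -- key End identities
  have e4 : ∀ x y : A, R (m y x) - R x * R y = L x * R y - R y * L x := by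
    intro x y
    have hm : R (m x y) = R y * L x - L x * R y + R y * R x := (eq_add_of_sub_eq (h3 x y).symm)
    have hm2 : R (m y x) = R x * R y + R y * R x - R (m x y) := by
      rw [← lin2 x y]; abel
    rw [hm2, hm]; abel
  have e3 : ∀ x y : A, R x * L y - L y * R x = L (m x y) - L x * L y := by
    intro x y
    have b1 : L (m x y) = L x * R y - R y * L x + L x * L y := eq_add_of_sub_eq (h4 y x)
    have b2 : L (m y x) = L y * R x - R x * L y + L y * L x := eq_add_of_sub_eq (h4 x y)
    have key := lin1 x y
    rw [b1, b2] at key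
    -- key : (LxRy - RyLx + LxLy) + (LyRx - RxLy + LyLx) = LxLy + LyLx
    have k2 : R x * L y - L y * R x = L x * R y - R y * L x := by
      have : L x * R y - R y * L x + (L y * R x - R x * L y) = 0 := by
        have := key
        calc L x * R y - R y * L x + (L y * R x - R x * L y)
            = (L x * R y - R y * L x + L x * L y + (L y * R x - R x * L y + L y * L x))
              - (L x * L y + L y * L x) := by abel
          _ = 0 := by rw [key]; abel
      calc R x * L y - L y * R x
          = -(L y * R x - R x * L y) := by abel
        _ = L x * R y - R y * L x := (neg_eq_of_add_eq_zero_left this)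
    rw [k2, b1]; abel
  refine ⟨?_, ?_, ?_, ?_⟩
  · intro x
    rw [dualT_apply, dualT_apply, h2 x, transpose_mul]
  · intro x
    rw [dualT_apply, dualT_apply, h1 x, transpose_mul]
  · intro x y
    simp only [dualT_apply]
    rw [← transpose_mul, ← transpose_mul, ← transpose_mul]
    have h := congrArg (Module.Dual.transpose (R := k) (M := V) (M' := V)) (e3 x y)
    rw [map_sub, map_sub] at h
    exact h
  · intro x y
    simp only [dualT_apply]
    rw [← transpose_mul, ← transpose_mul, ← transpose_mul]
    have h := congrArg (Module.Dual.transpose (R := k) (M := V) (M' := V)) (e4 x y)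
    rw [map_sub, map_sub] at h
    exact h
end

section
/- Let (A,∘) be an alternative algebra over a field of characteristic ≠ 2, (V,L,R) a bimodule of (A,∘), and Al: V → A an Al-operator, i.e., Al(u)∘Al(v) = Al(L(Al(u))v + R(Al(v))u) for all u,v ∈ V. Then the products u≺v = R(Al(v))u and u≻v = L(Al(u))v make V a pre-alternative algebra; Al is a homomorphism from the associated alternative algebra (V, •), where u•v = u≺v + u≻v, to (A,∘); and the image Al(V) is an alternative subalgebra of (A,∘). -/
open TensorProduct

universe u v w

variable {k : Type u} [Field k]

theorem stmt3 {A : Type v} {V : Type w} [AddCommGroup A] [Module k A]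
    [AddCommGroup V] [Module k V] (hchar : (2 : k) ≠ 0)
    (m : A →ₗ[k] A →ₗ[k] A) (halt : IsAlt m) (L R : A →ₗ[k] Module.End k V)
    (hbim : IsAltBimod m L R) (Al : V →ₗ[k] A)
    (hAl : ∀ u v : V, m (Al u) (Al v) = Al (L (Al u) v + R (Al v) u)) :
    IsPreAlt (((R ∘ₗ Al : V →ₗ[k] Module.End k V) : V →ₗ[k] V →ₗ[k] V).flip)
        ((L ∘ₗ Al : V →ₗ[k] Module.End k V) : V →ₗ[k] V →ₗ[k] V) ∧
    (∀ u v : V, Al (R (Al v) u + L (Al u) v) = m (Al u) (Al v)) ∧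
    (∀ x y : A, x ∈ LinearMap.range Al → y ∈ LinearMap.range Al →
      m x y ∈ LinearMap.range Al) := by
  obtain ⟨h1, h2, h3, h4⟩ := hbim
  have key : ∀ u v : V, Al (R (Al v) u + L (Al u) v) = m (Al u) (Al v) := by
    intro u v; rw [add_comm, ← hAl]
  refine ⟨⟨?_, ?_, ?_, ?_⟩, key, ?_⟩
  · intro x y z
    simp only [mAssoc, rAssoc, LinearMap.flip_apply, LinearMap.comp_apply, key]
    have h := LinearMap.ext_iff.mp (h3 (Al x) (Al z)) y
    simp only [LinearMap.sub_apply, Module.End.mul_apply] at h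
    rw [sub_eq_iff_eq_add.mp h.symm]
    abel
  · intro x y z
    simp only [mAssoc, lAssoc, LinearMap.flip_apply, LinearMap.comp_apply, key]
    have h := LinearMap.ext_iff.mp (h4 (Al z) (Al x)) y
    simp only [LinearMap.sub_apply, Module.End.mul_apply] at h
    rw [sub_eq_iff_eq_add'.mp h]
    abel
  · intro x y
    simp only [rAssoc, LinearMap.flip_apply, LinearMap.comp_apply, key]
    have h := LinearMap.ext_iff.mp (h2 (Al x)) y
    simp only [Module.End.mul_apply] at h
    rw [h]; abel
  · intro x y
    simp only [lAssoc, LinearMap.flip_apply, LinearMap.comp_apply, key]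
    have h := LinearMap.ext_iff.mp (h1 (Al x)) y
    simp only [Module.End.mul_apply] at h
    rw [h]; abel
  · rintro x y ⟨u, rfl⟩ ⟨v, rfl⟩
    exact ⟨L (Al u) v + R (Al v) u, (hAl u v).symm⟩
end

section
/- Let (A,∘) be an alternative algebra over a field of characteristic ≠ 2. The following are equivalent: (1) there exist bilinear products ≺,≻ on A making (A,≺,≻) a pre-alternative algebra with x≺y + x≻y = x∘y for all x,y ∈ A; (2) there exist a bimodule (V,L,R) of (A,∘) and a linear bijection Al: V → A satisfying Al(u)∘Al(v) = Al(L(Al(u))v + R(Al(v))u) for all u,v ∈ V (an invertible Al-operator); (3) there exist a bimodule (V,L,R) of (A,∘) and a linear bijection D: A → V satisfying the 1-cocycle condition D(x∘y) = L(x)D(y) + R(y)D(x) for all x,y ∈ A. -/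
open TensorProduct

universe u v w

variable {k : Type u} [Field k]

theorem stmt4 {A : Type v} [AddCommGroup A] [Module k A] (hchar : (2 : k) ≠ 0)
    (m : A →ₗ[k] A →ₗ[k] A) (halt : IsAlt m) :
    ((∃ p s : A →ₗ[k] A →ₗ[k] A, IsPreAlt p s ∧ ∀ x y, p x y + s x y = m x y) ↔
      (∃ (V : Type v) (_ : AddCommGroup V) (_ : Module k V)
          (L R : A →ₗ[k] Module.End k V) (Al : V →ₗ[k] A),
        IsAltBimod m L R ∧ Function.Bijective Al ∧
        ∀ u v : V, m (Al u) (Al v) = Al (L (Al u) v + R (Al v) u))) ∧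
    ((∃ p s : A →ₗ[k] A →ₗ[k] A, IsPreAlt p s ∧ ∀ x y, p x y + s x y = m x y) ↔
      (∃ (V : Type v) (_ : AddCommGroup V) (_ : Module k V)
          (L R : A →ₗ[k] Module.End k V) (D : A →ₗ[k] V),
        IsAltBimod m L R ∧ Function.Bijective D ∧
        ∀ x y : A, D (m x y) = L x (D y) + R y (D x))) := by
  classical
  have h13 : (∃ p s : A →ₗ[k] A →ₗ[k] A, IsPreAlt p s ∧ ∀ x y, p x y + s x y = m x y) →
      (∃ (V : Type v) (_ : AddCommGroup V) (_ : Module k V)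
          (L R : A →ₗ[k] Module.End k V) (D : A →ₗ[k] V),
        IsAltBimod m L R ∧ Function.Bijective D ∧
        ∀ x y : A, D (m x y) = L x (D y) + R y (D x)) := by
    rintro ⟨p, s, ⟨ha, hb, hc, hd⟩, hsum⟩
    refine ⟨A, inferInstance, inferInstance, s, p.flip, LinearMap.id,
      ⟨?_, ?_, ?_, ?_⟩, Function.bijective_id, ?_⟩
    · intro x
      ext w
      have h := hd x w
      simp only [lAssoc, hsum] at h
      simpa [Module.End.mul_apply] using sub_eq_zero.mp h
    · intro x
      ext w
      have h := hc x w
      simp only [rAssoc, hsum] at h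
      simpa [Module.End.mul_apply] using (sub_eq_zero.mp h).symm
    · intro x y
      ext w
      have h := ha x w y
      simp only [mAssoc, rAssoc, hsum] at h
      simp only [LinearMap.sub_apply, Module.End.mul_apply, LinearMap.flip_apply]
      rw [← sub_eq_zero, ← h]
      abel
    · intro x y
      ext w
      have h := hb y w x
      simp only [mAssoc, lAssoc, hsum] at h
      simp only [LinearMap.sub_apply, Module.End.mul_apply, LinearMap.flip_apply]
      rw [← sub_eq_zero, ← h]
      abel
    · intro x y
      simp only [LinearMap.id_coe, id_eq, LinearMap.flip_apply]
      rw [← hsum]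
      abel
  have h31 : (∃ (V : Type v) (_ : AddCommGroup V) (_ : Module k V)
          (L R : A →ₗ[k] Module.End k V) (D : A →ₗ[k] V),
        IsAltBimod m L R ∧ Function.Bijective D ∧
        ∀ x y : A, D (m x y) = L x (D y) + R y (D x)) →
      (∃ p s : A →ₗ[k] A →ₗ[k] A, IsPreAlt p s ∧ ∀ x y, p x y + s x y = m x y) := by
    rintro ⟨V, iV, iM, L, R, D, ⟨hb1, hb2, hb3, hb4⟩, hD, hcoc⟩
    letI := iV; letI := iM
    let E : A ≃ₗ[k] V := LinearEquiv.ofBijective D hD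
    have hcan : ∀ w : V, D (E.symm w) = w := fun w => E.apply_symm_apply w
    let p : A →ₗ[k] A →ₗ[k] A := LinearMap.mk₂ k (fun x y => E.symm (R y (D x)))
      (fun x x' y => by simp [map_add]) (fun c x y => by simp [map_smul])
      (fun x y y' => by simp [map_add]) (fun c x y => by simp [map_smul])
    let s : A →ₗ[k] A →ₗ[k] A := LinearMap.mk₂ k (fun x y => E.symm (L x (D y)))
      (fun x x' y => by simp [map_add]) (fun c x y => by simp [map_smul])
      (fun x y y' => by simp [map_add]) (fun c x y => by simp [map_smul])
    have hDp : ∀ x y : A, D (p x y) = R y (D x) := fun x y => hcan _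
    have hDs : ∀ x y : A, D (s x y) = L x (D y) := fun x y => hcan _
    have hsum : ∀ x y : A, p x y + s x y = m x y := by
      intro x y
      apply hD.1
      rw [map_add, hDp, hDs, hcoc, add_comm]
    refine ⟨p, s, ⟨?_, ?_, ?_, ?_⟩, hsum⟩
    · intro x y z
      apply hD.1
      rw [map_zero]
      simp only [mAssoc, rAssoc, map_add, map_sub, hsum, hDp, hDs]
      have h := LinearMap.congr_fun (hb3 x z) (D y)
      simp only [LinearMap.sub_apply, Module.End.mul_apply] at h
      rw [← sub_eq_zero] at h
      rw [← h]
      abel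
    · intro x y z
      apply hD.1
      rw [map_zero]
      simp only [mAssoc, lAssoc, map_add, map_sub, hsum, hDp, hDs]
      have h := LinearMap.congr_fun (hb4 z x) (D y)
      simp only [LinearMap.sub_apply, Module.End.mul_apply] at h
      rw [← sub_eq_zero] at h
      rw [← h]
      abel
    · intro x y
      apply hD.1
      rw [map_zero]
      simp only [rAssoc, map_sub, hsum, hDp]
      have h := LinearMap.congr_fun (hb2 x) (D y)
      simp only [Module.End.mul_apply] at h
      rw [sub_eq_zero]
      exact h.symm
    · intro x y
      apply hD.1
      rw [map_zero]
      simp only [lAssoc, map_sub, hsum, hDs]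
      have h := LinearMap.congr_fun (hb1 x) (D y)
      simp only [Module.End.mul_apply] at h
      rw [sub_eq_zero]
      exact h
  have h32 : (∃ (V : Type v) (_ : AddCommGroup V) (_ : Module k V)
          (L R : A →ₗ[k] Module.End k V) (D : A →ₗ[k] V),
        IsAltBimod m L R ∧ Function.Bijective D ∧
        ∀ x y : A, D (m x y) = L x (D y) + R y (D x)) →
      (∃ (V : Type v) (_ : AddCommGroup V) (_ : Module k V)
          (L R : A →ₗ[k] Module.End k V) (Al : V →ₗ[k] A),
        IsAltBimod m L R ∧ Function.Bijective Al ∧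
        ∀ u v : V, m (Al u) (Al v) = Al (L (Al u) v + R (Al v) u)) := by
    rintro ⟨V, iV, iM, L, R, D, hbim, hD, hcoc⟩
    letI := iV; letI := iM
    let E : A ≃ₗ[k] V := LinearEquiv.ofBijective D hD
    have hcan : ∀ w : V, D (E.symm w) = w := fun w => E.apply_symm_apply w
    have hcan2 : ∀ a : A, E.symm (D a) = a := fun a => E.symm_apply_apply a
    refine ⟨V, iV, iM, L, R, E.symm.toLinearMap, hbim, E.symm.bijective, ?_⟩
    intro u v
    have h := hcoc (E.symm u) (E.symm v)
    rw [hcan, hcan] at h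
    have h2 := congrArg E.symm h
    rw [hcan2] at h2
    simpa using h2
  have h23 : (∃ (V : Type v) (_ : AddCommGroup V) (_ : Module k V)
          (L R : A →ₗ[k] Module.End k V) (Al : V →ₗ[k] A),
        IsAltBimod m L R ∧ Function.Bijective Al ∧
        ∀ u v : V, m (Al u) (Al v) = Al (L (Al u) v + R (Al v) u)) →
      (∃ (V : Type v) (_ : AddCommGroup V) (_ : Module k V)
          (L R : A →ₗ[k] Module.End k V) (D : A →ₗ[k] V),
        IsAltBimod m L R ∧ Function.Bijective D ∧
        ∀ x y : A, D (m x y) = L x (D y) + R y (D x)) := by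
    rintro ⟨V, iV, iM, L, R, Al, hbim, hAl, hop⟩
    letI := iV; letI := iM
    let E : A ≃ₗ[k] V := (LinearEquiv.ofBijective Al hAl).symm
    have hcan : ∀ a : A, Al (E a) = a := fun a =>
      (LinearEquiv.ofBijective Al hAl).apply_symm_apply a
    have hcan2 : ∀ w : V, E (Al w) = w := fun w =>
      (LinearEquiv.ofBijective Al hAl).symm_apply_apply w
    refine ⟨V, iV, iM, L, R, E.toLinearMap, hbim, E.bijective, ?_⟩
    intro x y
    have h := hop (E x) (E y)
    rw [hcan, hcan] at h
    have h2 := congrArg E h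
    rw [hcan2] at h2
    simpa using h2
  exact ⟨⟨fun h => h32 (h13 h), fun h => h31 (h23 h)⟩, ⟨h13, h31⟩⟩
end

section
/- Let (A,∘) be an alternative algebra over a field of characteristic 0 that is graded by the positive integers: A = ⊕_{i≥1} A_i with A_i∘A_j ⊆ A_{i+j}. Define bilinear products on A by x_i ≻ x_j = (j/(i+j)) x_i∘x_j and x_i ≺ x_j = (i/(i+j)) x_i∘x_j for x_i ∈ A_i, x_j ∈ A_j, extended bilinearly. Then (A,≺,≻) is a pre-alternative algebra and x≺y + x≻y = x∘y for all x,y ∈ A. -/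
open TensorProduct

universe u v w

variable {k : Type u} [Field k]

/-!
The grading gives the Euler operator `D`, acting on `𝒜 i` as multiplication by `i`. It is a
derivation of `∘`, it is injective because `𝒜 0 = ⊥` and the characteristic is `0`, and the
weights `i / (i + j)`, `j / (i + j)` are exactly those for which `D (x ≺ y) = D x ∘ y` and
`D (x ≻ y) = x ∘ D y`. Hence `D` sends each of the middle, right and left associators of
`(≺, ≻)` to the associator of `∘` with `D` applied to one argument, and every pre-alternative
identity becomes, after applying `D`, an alternative law or one of its linearizations.
-/

section HomogeneousExt

variable {R : Type*} [CommSemiring R] {ι : Type*} {A B C : Type*}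
  [AddCommMonoid A] [Module R A] [AddCommMonoid B] [Module R B] [AddCommMonoid C] [Module R C]

theorem LinearMap.ext_of_iSup_eq_top {𝒜 : ι → Submodule R A} (h𝒜 : ⨆ i, 𝒜 i = ⊤)
    {f g : A →ₗ[R] B} (hfg : ∀ i, ∀ x ∈ 𝒜 i, f x = g x) : f = g :=
  LinearMap.ext_on (s := ⋃ i, (𝒜 i : Set A)) (by rw [← Submodule.iSup_eq_span, h𝒜])
    fun _ hx ↦ by
      obtain ⟨i, hi⟩ := Set.mem_iUnion.mp hx
      exact hfg i _ hi

theorem LinearMap.ext₂_of_iSup_eq_top {ι' : Type*} {𝒜 : ι → Submodule R A}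
    {ℬ : ι' → Submodule R B} (h𝒜 : ⨆ i, 𝒜 i = ⊤) (hℬ : ⨆ j, ℬ j = ⊤)
    {f g : A →ₗ[R] B →ₗ[R] C} (hfg : ∀ i j, ∀ x ∈ 𝒜 i, ∀ y ∈ ℬ j, f x y = g x y) :
    f = g :=
  LinearMap.ext_of_iSup_eq_top h𝒜 fun i x hx ↦
    LinearMap.ext_of_iSup_eq_top hℬ fun j y hy ↦ hfg i j x hx y hy

end HomogeneousExt

namespace DirectSum.IsInternal

variable {ι : Type*} [DecidableEq ι] {A : Type*} [AddCommGroup A] [Module k A]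
  {𝒜 : ι → Submodule k A}

noncomputable def gradedSMul (h : IsInternal 𝒜) (c : ι → k) : A →ₗ[k] A :=
  toModule k ι A (fun i ↦ c i • (𝒜 i).subtype) ∘ₗ
    (LinearEquiv.ofBijective (coeLinearMap 𝒜) h).symm.toLinearMap

theorem gradedSMul_of_mem (h : IsInternal 𝒜) (c : ι → k) {i : ι} {x : A} (hx : x ∈ 𝒜 i) :
    h.gradedSMul c x = c i • x := by
  have hx' : (LinearEquiv.ofBijective (coeLinearMap 𝒜) h).symm x =
      lof k ι (fun i ↦ 𝒜 i) i ⟨x, hx⟩ :=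
    (LinearEquiv.symm_apply_eq _).mpr (coeLinearMap_of 𝒜 i ⟨x, hx⟩).symm
  simp [gradedSMul, hx', toModule_lof]

theorem gradedSMul_injective (h : IsInternal 𝒜) {c : ι → k} (hc : ∀ i, c i = 0 → 𝒜 i = ⊥) :
    Function.Injective (h.gradedSMul c) := by
  have hinv : h.gradedSMul c⁻¹ ∘ₗ h.gradedSMul c = LinearMap.id :=
    LinearMap.ext_of_iSup_eq_top h.submodule_iSup_eq_top fun i x hx ↦ by
      rw [LinearMap.comp_apply, h.gradedSMul_of_mem c hx,
        h.gradedSMul_of_mem c⁻¹ (Submodule.smul_mem _ _ hx), Pi.inv_apply, LinearMap.id_apply]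
      by_cases hci : c i = 0
      · have hx0 : x = 0 := by simpa [hc i hci] using hx
        rw [hx0, smul_zero, smul_zero]
      · exact inv_smul_smul₀ hci x
  exact Function.LeftInverse.injective (g := h.gradedSMul c⁻¹) (LinearMap.congr_fun hinv)

end DirectSum.IsInternal

section Associator

variable {M : Type*} [AddCommGroup M] [Module k M] {m : M →ₗ[k] M →ₗ[k] M}

def LinearMap.associator (m : M →ₗ[k] M →ₗ[k] M) (x y z : M) : M :=
  m (m x y) z - m x (m y z)

theorem IsAlt.associator_self_left (h : IsAlt m) (x y : M) : m.associator x x y = 0 :=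
  sub_eq_zero.mpr (h.1 x y)

theorem IsAlt.associator_self_right (h : IsAlt m) (x y : M) : m.associator y x x = 0 :=
  sub_eq_zero.mpr (h.2 x y)

theorem IsAlt.associator_add_associator_swap_left (h : IsAlt m) (x y z : M) :
    m.associator x y z + m.associator y x z = 0 := by
  have e := h.associator_self_left (x + y) z
  have ex := h.associator_self_left x z
  have ey := h.associator_self_left y z
  simp only [LinearMap.associator, map_add, LinearMap.add_apply] at e ex ey ⊢
  linear_combination (norm := module) e - ex - ey

theorem IsAlt.associator_add_associator_swap_right (h : IsAlt m) (x y z : M) :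
    m.associator x y z + m.associator x z y = 0 := by
  have e := h.associator_self_right (y + z) x
  have ey := h.associator_self_right y x
  have ez := h.associator_self_right z x
  simp only [LinearMap.associator, map_add, LinearMap.add_apply] at e ey ez ⊢
  linear_combination (norm := module) e - ey - ez

end Associator

section PreAlternative

variable {M : Type*} [AddCommGroup M] [Module k M] {m p s : M →ₗ[k] M →ₗ[k] M} {D : M →ₗ[k] M}

theorem add_apply_eq_of_injective_derivation (hinj : Function.Injective D)
    (hDm : ∀ x y, D (m x y) = m (D x) y + m x (D y)) (hp : ∀ x y, D (p x y) = m (D x) y)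
    (hs : ∀ x y, D (s x y) = m x (D y)) (x y : M) : p x y + s x y = m x y :=
  hinj (by rw [map_add, hp, hs, hDm])

theorem map_mAssoc_eq_associator (hp : ∀ x y, D (p x y) = m (D x) y)
    (hs : ∀ x y, D (s x y) = m x (D y)) (x y z : M) :
    D (mAssoc p s x y z) = m.associator x (D y) z := by
  simp only [mAssoc, LinearMap.associator, map_sub, hp, hs]

theorem map_rAssoc_eq_associator (hp : ∀ x y, D (p x y) = m (D x) y)
    (hps : ∀ x y, p x y + s x y = m x y) (x y z : M) :
    D (rAssoc p s x y z) = m.associator (D x) y z := by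
  simp only [rAssoc, LinearMap.associator, map_sub, hp, hps]

theorem map_lAssoc_eq_associator (hs : ∀ x y, D (s x y) = m x (D y))
    (hps : ∀ x y, p x y + s x y = m x y) (x y z : M) :
    D (lAssoc p s x y z) = m.associator x y (D z) := by
  simp only [lAssoc, LinearMap.associator, map_sub, hs, hps]

theorem isPreAlt_of_injective (halt : IsAlt m) (hinj : Function.Injective D)
    (hp : ∀ x y, D (p x y) = m (D x) y) (hs : ∀ x y, D (s x y) = m x (D y))
    (hps : ∀ x y, p x y + s x y = m x y) : IsPreAlt p s := by
  have hm := map_mAssoc_eq_associator hp hs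
  have hr := map_rAssoc_eq_associator hp hps
  have hl := map_lAssoc_eq_associator hs hps
  refine ⟨fun x y z ↦ hinj ?_, fun x y z ↦ hinj ?_, fun x y ↦ hinj ?_, fun x y ↦ hinj ?_⟩
  · rw [map_add, hm, hr, map_zero, halt.associator_add_associator_swap_left]
  · rw [map_add, hm, hl, map_zero, halt.associator_add_associator_swap_right]
  · rw [hr, map_zero, halt.associator_self_right]
  · rw [hl, map_zero, halt.associator_self_left]

end PreAlternative

namespace DirectSum.IsInternal

variable {A : Type*} [AddCommGroup A] [Module k A] {𝒜 : ℕ → Submodule k A}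
  {m p s : A →ₗ[k] A →ₗ[k] A}

noncomputable def euler (h : IsInternal 𝒜) : A →ₗ[k] A :=
  h.gradedSMul fun i ↦ (i : k)

theorem euler_of_mem (h : IsInternal 𝒜) {i : ℕ} {x : A} (hx : x ∈ 𝒜 i) :
    h.euler x = (i : k) • x :=
  h.gradedSMul_of_mem _ hx

theorem euler_injective [CharZero k] (h : IsInternal 𝒜) (h0 : 𝒜 0 = ⊥) :
    Function.Injective h.euler :=
  h.gradedSMul_injective fun i hi ↦ by rw [Nat.cast_eq_zero.mp hi, h0]

theorem euler_leibniz (h : IsInternal 𝒜)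
    (hgr : ∀ i j : ℕ, ∀ x ∈ 𝒜 i, ∀ y ∈ 𝒜 j, m x y ∈ 𝒜 (i + j)) (x y : A) :
    h.euler (m x y) = m (h.euler x) y + m x (h.euler y) := by
  refine LinearMap.congr_fun₂ (f := m.compr₂ h.euler) (g := m ∘ₗ h.euler + m.compl₂ h.euler)
    ?_ x y
  refine LinearMap.ext₂_of_iSup_eq_top h.submodule_iSup_eq_top h.submodule_iSup_eq_top
    fun i j x hx y hy ↦ ?_
  simp [h.euler_of_mem hx, h.euler_of_mem hy, h.euler_of_mem (hgr i j x hx y hy), add_smul]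

theorem euler_apply_apply_of_left_weight [CharZero k] (h : IsInternal 𝒜)
    (hgr : ∀ i j : ℕ, ∀ x ∈ 𝒜 i, ∀ y ∈ 𝒜 j, m x y ∈ 𝒜 (i + j))
    (hp : ∀ i j : ℕ, ∀ x ∈ 𝒜 i, ∀ y ∈ 𝒜 j, p x y = ((i : k) / ((i : k) + (j : k))) • m x y)
    (x y : A) : h.euler (p x y) = m (h.euler x) y := by
  refine LinearMap.congr_fun₂ (f := p.compr₂ h.euler) (g := m ∘ₗ h.euler) ?_ x y
  refine LinearMap.ext₂_of_iSup_eq_top h.submodule_iSup_eq_top h.submodule_iSup_eq_top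
    fun i j x hx y hy ↦ ?_
  simp only [LinearMap.compr₂_apply, LinearMap.comp_apply, hp i j x hx y hy, map_smul,
    h.euler_of_mem hx, h.euler_of_mem (hgr i j x hx y hy), LinearMap.smul_apply, smul_smul,
    Nat.cast_add]
  -- `i + j = 0` forces `i = 0`, so the junk value `0 / 0 = 0` does no harm
  rw [div_mul_cancel_of_imp fun h ↦ by norm_cast at h ⊢; omega]

theorem euler_apply_apply_of_right_weight [CharZero k] (h : IsInternal 𝒜)
    (hgr : ∀ i j : ℕ, ∀ x ∈ 𝒜 i, ∀ y ∈ 𝒜 j, m x y ∈ 𝒜 (i + j))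
    (hs : ∀ i j : ℕ, ∀ x ∈ 𝒜 i, ∀ y ∈ 𝒜 j, s x y = ((j : k) / ((i : k) + (j : k))) • m x y)
    (x y : A) : h.euler (s x y) = m x (h.euler y) := by
  refine LinearMap.congr_fun₂ (f := s.compr₂ h.euler) (g := m.compl₂ h.euler) ?_ x y
  refine LinearMap.ext₂_of_iSup_eq_top h.submodule_iSup_eq_top h.submodule_iSup_eq_top
    fun i j x hx y hy ↦ ?_
  simp only [LinearMap.compr₂_apply, LinearMap.compl₂_apply, hs i j x hx y hy, map_smul,
    h.euler_of_mem hy, h.euler_of_mem (hgr i j x hx y hy), smul_smul, Nat.cast_add]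
  rw [div_mul_cancel_of_imp fun h ↦ by norm_cast at h ⊢; omega]

end DirectSum.IsInternal

theorem stmt5 {A : Type v} [AddCommGroup A] [Module k A] [CharZero k]
    (𝒜 : ℕ → Submodule k A) (hinternal : DirectSum.IsInternal 𝒜) (h0 : 𝒜 0 = ⊥)
    (m : A →ₗ[k] A →ₗ[k] A) (halt : IsAlt m)
    (hgr : ∀ i j : ℕ, ∀ x ∈ 𝒜 i, ∀ y ∈ 𝒜 j, m x y ∈ 𝒜 (i + j))
    (p s : A →ₗ[k] A →ₗ[k] A)
    (hp : ∀ i j : ℕ, ∀ x ∈ 𝒜 i, ∀ y ∈ 𝒜 j,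
      p x y = ((i : k) / ((i : k) + (j : k))) • m x y)
    (hs : ∀ i j : ℕ, ∀ x ∈ 𝒜 i, ∀ y ∈ 𝒜 j,
      s x y = ((j : k) / ((i : k) + (j : k))) • m x y) :
    IsPreAlt p s ∧ ∀ x y, p x y + s x y = m x y := by
  have hinj := hinternal.euler_injective h0
  have hDp := hinternal.euler_apply_apply_of_left_weight hgr hp
  have hDs := hinternal.euler_apply_apply_of_right_weight hgr hs
  have hps := add_apply_eq_of_injective_derivation hinj (hinternal.euler_leibniz hgr) hDp hDs
  exact ⟨isPreAlt_of_injective halt hinj hDp hDs hps, hps⟩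
end

section
/- Let (A,∘) be a finite-dimensional alternative algebra over a field of characteristic ≠ 2 equipped with a symplectic form ω. Then there exist unique bilinear products ≺,≻ on A determined by ω(x≺y, z) = ω(x, y∘z) and ω(x≻y, z) = ω(y, z∘x) for all x,y,z ∈ A, and (A,≺,≻) is a pre-alternative algebra with x≺y + x≻y = x∘y for all x,y ∈ A. -/
open TensorProduct

universe u v w

variable {k : Type u} [Field k]

theorem stmt6 {A : Type v} [AddCommGroup A] [Module k A] [FiniteDimensional k A]
    (hchar : (2 : k) ≠ 0) (m : A →ₗ[k] A →ₗ[k] A) (halt : IsAlt m)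
    (ω : A →ₗ[k] A →ₗ[k] k)
    (hskew : ∀ x y, ω x y = - ω y x)
    (hnondeg : ∀ x, (∀ y, ω x y = 0) → x = 0)
    (hclosed : ∀ x y z, ω (m x y) z + ω (m y z) x + ω (m z x) y = 0) :
    (∃ p s : A →ₗ[k] A →ₗ[k] A,
      (∀ x y z, ω (p x y) z = ω x (m y z)) ∧
      (∀ x y z, ω (s x y) z = ω y (m z x)) ∧
      IsPreAlt p s ∧ (∀ x y, p x y + s x y = m x y)) ∧
    (∀ p₁ s₁ p₂ s₂ : A →ₗ[k] A →ₗ[k] A,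
      (∀ x y z, ω (p₁ x y) z = ω x (m y z)) → (∀ x y z, ω (s₁ x y) z = ω y (m z x)) →
      (∀ x y z, ω (p₂ x y) z = ω x (m y z)) → (∀ x y z, ω (s₂ x y) z = ω y (m z x)) →
      p₁ = p₂ ∧ s₁ = s₂) := by
  classical
  -- nondegeneracy in the second slot
  have hnondeg' : ∀ x : A, (∀ y, ω y x = 0) → x = 0 := by
    intro x hx
    exact hnondeg x (fun y => by rw [hskew, hx y, neg_zero])
  -- ω as an injective map into the dual
  have hinj : Function.Injective ω := by
    intro a b hab
    have : ∀ y, ω (a - b) y = 0 := fun y => by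
      simp [map_sub, hab]
    have := hnondeg _ this
    exact sub_eq_zero.mp this
  let E : A ≃ₗ[k] Module.Dual k A :=
    LinearMap.linearEquivOfInjective (ω : A →ₗ[k] Module.Dual k A) hinj
      (Subspace.dual_finrank_eq (K := k) (V := A)).symm
  have hE : ∀ a : A, (E a : Module.Dual k A) = ω a := fun a =>
    LinearMap.linearEquivOfInjective_apply _ _ a
  -- the products
  let p : A →ₗ[k] A →ₗ[k] A := LinearMap.mk₂ k
    (fun x y => E.symm ((ω x).comp (m y)))
    (fun x x' y => by simp [map_add, LinearMap.add_comp])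
    (fun c x y => by simp [map_smul, LinearMap.smul_comp])
    (fun x y y' => by simp [map_add, LinearMap.comp_add])
    (fun c x y => by
      rw [← map_smul (E.symm)]
      congr 1
      ext z
      simp)
  let s : A →ₗ[k] A →ₗ[k] A := LinearMap.mk₂ k
    (fun x y => E.symm ((ω y).comp (m.flip x)))
    (fun x x' y => by
      rw [← map_add (E.symm)]
      congr 1
      ext z
      simp)
    (fun c x y => by
      rw [← map_smul (E.symm)]
      congr 1
      ext z
      simp)
    (fun x y y' => by simp [map_add, LinearMap.add_comp])
    (fun c x y => by simp [map_smul, LinearMap.smul_comp])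
  have hωp : ∀ x y z, ω (p x y) z = ω x (m y z) := by
    intro x y z
    have h := E.apply_symm_apply ((ω x).comp (m y))
    rw [hE] at h
    show ω (E.symm ((ω x).comp (m y))) z = ω x (m y z)
    rw [h]
    rfl
  have hωs : ∀ x y z, ω (s x y) z = ω y (m z x) := by
    intro x y z
    have h := E.apply_symm_apply ((ω y).comp (m.flip x))
    rw [hE] at h
    show ω (E.symm ((ω y).comp (m.flip x))) z = ω y (m z x)
    rw [h]
    rfl
  -- p + s = m
  have hps : ∀ x y, p x y + s x y = m x y := by
    intro x y
    rw [← sub_eq_zero]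
    apply hnondeg
    intro z
    have h1 := hclosed x y z
    have h2 := hskew x (m y z)
    have h3 := hskew y (m z x)
    simp only [map_sub, map_add, LinearMap.sub_apply, LinearMap.add_apply, hωp, hωs]
    linear_combination -h1 + h2 + h3
  -- the associator of m
  set asc : A → A → A → A := fun x y z => m (m x y) z - m x (m y z) with hasc
  have ha1 : ∀ x y, asc x x y = 0 := fun x y => by simp [hasc, halt.1 x y]
  have ha2 : ∀ x y, asc y x x = 0 := fun x y => by simp [hasc, halt.2 x y]
  have hsw1 : ∀ x y z, asc x y z + asc y x z = 0 := by
    intro x y z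
    have key : asc x y z + asc y x z
        = asc (x + y) (x + y) z - asc x x z - asc y y z := by
      simp only [hasc, map_add, LinearMap.add_apply]
      abel
    rw [key, ha1, ha1, ha1]
    abel
  have hsw2 : ∀ x y z, asc x y z + asc x z y = 0 := by
    intro x y z
    have key : asc x y z + asc x z y
        = asc x (y + z) (y + z) - asc x y y - asc x z z := by
      simp only [hasc, map_add, LinearMap.add_apply]
      abel
    rw [key, ha2, ha2, ha2]
    abel
  have hcyc : ∀ x y z, asc x y z = asc y z x := by
    intro x y z
    have a := hsw1 x y z
    have b := hsw2 y x z
    have : asc x y z - asc y z x = (asc x y z + asc y x z) - (asc y x z + asc y z x) := by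
      abel
    rw [a, b, sub_zero] at this
    exact sub_eq_zero.mp this
  refine ⟨⟨p, s, hωp, hωs, ⟨?_, ?_, ?_, ?_⟩, hps⟩, ?_⟩
  · -- mAssoc x y z + rAssoc y x z = 0
    intro x y z
    apply hnondeg
    intro w
    simp only [mAssoc, rAssoc, hps, map_add, map_sub, LinearMap.add_apply,
      LinearMap.sub_apply, hωp, hωs, map_zero, LinearMap.zero_apply]
    have e := congrArg (fun t => ω y t) (hcyc x z w)
    simp only [hasc, map_sub] at e
    linear_combination -e
  · -- mAssoc x y z + lAssoc x z y = 0
    intro x y z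
    apply hnondeg
    intro w
    simp only [mAssoc, lAssoc, hps, map_add, map_sub, LinearMap.add_apply,
      LinearMap.sub_apply, hωp, hωs, map_zero, LinearMap.zero_apply]
    have e := congrArg (fun t => ω y t) (hcyc z w x)
    simp only [hasc, map_sub] at e
    linear_combination e
  · -- rAssoc y x x = 0
    intro x y
    apply hnondeg
    intro w
    simp only [rAssoc, hps, map_sub, LinearMap.sub_apply, hωp, hωs, halt.1,
      map_zero, LinearMap.zero_apply]
    ring
  · -- lAssoc x x y = 0
    intro x y
    apply hnondeg
    intro w
    simp only [lAssoc, hps, map_sub, LinearMap.sub_apply, hωp, hωs, halt.2,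
      map_zero, LinearMap.zero_apply]
    ring
  · -- uniqueness
    intro p₁ s₁ p₂ s₂ h1 h2 h3 h4
    constructor
    · ext x y
      have : ∀ z, ω (p₁ x y - p₂ x y) z = 0 := fun z => by
        simp [map_sub, h1, h3]
      exact sub_eq_zero.mp (hnondeg _ this)
    · ext x y
      have : ∀ z, ω (s₁ x y - s₂ x y) z = 0 := fun z => by
        simp [map_sub, h2, h4]
      exact sub_eq_zero.mp (hnondeg _ this)
end

section
/- Let (A,∘) be a finite-dimensional alternative algebra over a field of characteristic ≠ 2 and let r ∈ A⊗A be skew-symmetric. Then r is a solution of the alternative Yang–Baxter equation r₂₃∘r₁₂ − r₁₂∘r₁₃ − r₁₃∘r₂₃ = 0 if and only if T_r(a*)∘T_r(b*) = T_r(r_∘*(T_r(a*))b* + l_∘*(T_r(b*))a*) for all a*,b* ∈ A*, i.e., T_r is an Al-operator of (A,∘) associated to the bimodule (A*, r_∘*, l_∘*). In that case, a*≺b* = l_∘*(T_r(b*))a* and a*≻b* = r_∘*(T_r(a*))b* define a pre-alternative algebra structure on A*. -/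
open TensorProduct

universe u v w

variable {k : Type u} [Field k]

/-!
Skew-symmetry of `r` turns the pairing of `r₂₃∘r₁₂ − r₁₂∘r₁₃ − r₁₃∘r₂₃` with `a ⊗ b ⊗ c` into
`-(⟨a, T b ∘ T c⟩ + ⟨b, T c ∘ T a⟩ + ⟨c, T a ∘ T b⟩)` (with `T = T_r`), and the pairing of
`T(r_∘*(T a) b + l_∘*(T b) a)` with `c` into the first two of these terms. So the Yang–Baxter
expression pairs with `a ⊗ b ⊗ c` as the defect of the Al-operator identity pairs with `c`, and
pure tensors of functionals separate `A ⊗ A ⊗ A`.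

In an alternative algebra the associator is alternating, hence cyclic, which is exactly what
makes `(A*, r_∘*, l_∘*)` an alternative bimodule. An Al-operator `T` of an alternative bimodule
`(V, L, R)` makes `u ≺ v = R(T v) u`, `u ≻ v = L(T u) v` pre-alternative: `T` turns
`u ≺ v + u ≻ v` into `T u ∘ T v`, and the pre-alternative identities become the bimodule axioms.
-/

namespace TensorProduct

variable {R : Type*} [CommRing R] {M N P : Type*} [AddCommGroup M] [Module R M]
  [AddCommGroup N] [Module R N] [AddCommGroup P] [Module R P]

open Module

noncomputable def dualDistrib₃ (f : Dual R M) (g : Dual R N) (h : Dual R P) :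
    Dual R (M ⊗[R] (N ⊗[R] P)) :=
  dualDistrib R M (N ⊗[R] P) (f ⊗ₜ dualDistrib R N P (g ⊗ₜ h))

@[simp]
lemma dualDistrib₃_tmul_tmul (f : Dual R M) (g : Dual R N) (h : Dual R P) (x : M) (y : N)
    (z : P) : dualDistrib₃ f g h (x ⊗ₜ (y ⊗ₜ z)) = f x * (g y * h z) := by
  simp [dualDistrib₃, dualDistrib_apply]

lemma _root_.Module.Basis.tensorProduct_repr_apply_eq_dualDistrib {ι κ : Type*}
    (b : Basis ι R M) (c : Basis κ R N) (t : M ⊗[R] N) (i : ι) (j : κ) :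
    (b.tensorProduct c).repr t (i, j) = dualDistrib R M N (b.coord i ⊗ₜ c.coord j) t := by
  induction t using TensorProduct.induction_on with
  | zero => simp
  | tmul x y => simp [Basis.tensorProduct_repr_tmul_apply, dualDistrib_apply, mul_comm]
  | add t t' ht ht' => simp [ht, ht']

theorem eq_zero_of_forall_dualDistrib₃_eq_zero [Free R M] [Free R N] [Free R P]
    {t : M ⊗[R] (N ⊗[R] P)} (ht : ∀ f g h, dualDistrib₃ (R := R) f g h t = 0) : t = 0 := by
  let b := Free.chooseBasis R M
  let c := Free.chooseBasis R N
  let d := Free.chooseBasis R P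
  have hcd : ∀ j l,
      (c.tensorProduct d).coord (j, l) = dualDistrib R N P (c.coord j ⊗ₜ d.coord l) :=
    fun j l => LinearMap.ext fun u => c.tensorProduct_repr_apply_eq_dualDistrib d u j l
  refine (b.tensorProduct (c.tensorProduct d)).ext_elem fun ⟨i, j, l⟩ => ?_
  rw [b.tensorProduct_repr_apply_eq_dualDistrib, ← Basis.coord_apply, hcd]
  exact ht _ _ _

end TensorProduct

section Alternative

variable {M : Type v} {V : Type w} [AddCommGroup M] [Module k M] [AddCommGroup V] [Module k V]

def associatorOf (m : M →ₗ[k] M →ₗ[k] M) (x y z : M) : M := m (m x y) z - m x (m y z)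

namespace IsAlt

variable {m : M →ₗ[k] M →ₗ[k] M}

lemma associatorOf_add_swap_left (halt : IsAlt m) (x y z : M) :
    associatorOf m x y z + associatorOf m y x z = 0 := by
  have h := halt.1 (x + y) z
  simp only [map_add, LinearMap.add_apply] at h
  unfold associatorOf
  linear_combination (norm := module) h - halt.1 x z - halt.1 y z

lemma associatorOf_add_swap_right (halt : IsAlt m) (x y z : M) :
    associatorOf m x y z + associatorOf m x z y = 0 := by
  have h := halt.2 (y + z) x
  simp only [map_add, LinearMap.add_apply] at h
  unfold associatorOf
  linear_combination (norm := module) h - halt.2 y x - halt.2 z x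

lemma associatorOf_cyclic (halt : IsAlt m) (x y z : M) :
    associatorOf m x y z = associatorOf m y z x := by
  linear_combination (norm := module)
    halt.associatorOf_add_swap_left x y z - halt.associatorOf_add_swap_right y x z

end IsAlt

@[simp]
lemma dualT_apply_apply (L : M →ₗ[k] Module.End k V) (x : M) (f : Module.Dual k V) (v : V) :
    dualT L x f v = f (L x v) := rfl

theorem IsAlt.isAltBimod_dual {m : M →ₗ[k] M →ₗ[k] M} (halt : IsAlt m) :
    IsAltBimod m (dualT m.flip) (dualT m) := by
  refine ⟨fun x => ?_, fun x => ?_, fun x y => ?_, fun x y => ?_⟩ <;> ext f w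
  · simpa using congrArg f (halt.2 x w).symm
  · simpa using congrArg f (halt.1 x w)
  · have h := congrArg f (halt.associatorOf_cyclic x y w)
    simp only [associatorOf, map_sub] at h
    simp only [LinearMap.sub_apply, Module.End.mul_apply, dualT_apply_apply,
      LinearMap.flip_apply]
    linear_combination -h
  · have h := congrArg f (halt.associatorOf_cyclic x w y)
    simp only [associatorOf, map_sub] at h
    simp only [LinearMap.sub_apply, Module.End.mul_apply, dualT_apply_apply,
      LinearMap.flip_apply]
    linear_combination h

end Alternative

section AlOperator

variable {M : Type v} {V : Type w} [AddCommGroup M] [Module k M] [AddCommGroup V] [Module k V]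

def IsAlOperator (m : M →ₗ[k] M →ₗ[k] M) (L R : M →ₗ[k] Module.End k V) (T : V →ₗ[k] M) :
    Prop :=
  ∀ u v : V, m (T u) (T v) = T (L (T u) v + R (T v) u)

theorem IsAltBimod.isPreAlt_of_isAlOperator {m : M →ₗ[k] M →ₗ[k] M}
    {L R : M →ₗ[k] Module.End k V} {T : V →ₗ[k] M} (hbimod : IsAltBimod m L R)
    (hT : IsAlOperator m L R T) :
    IsPreAlt ((R ∘ₗ T : V →ₗ[k] Module.End k V) : V →ₗ[k] V →ₗ[k] V).flip
      (L ∘ₗ T : V →ₗ[k] Module.End k V) := by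
  obtain ⟨hL, hR, hRL, hLR⟩ := hbimod
  have hsum : ∀ u v : V, T (R (T v) u + L (T u) v) = m (T u) (T v) := fun u v => by
    rw [add_comm, hT]
  refine ⟨fun x y z => ?_, fun x y z => ?_, fun x y => ?_, fun x y => ?_⟩ <;>
    simp only [mAssoc, rAssoc, lAssoc, LinearMap.flip_apply, LinearMap.comp_apply, hsum]
  · have h := LinearMap.congr_fun (hRL (T x) (T z)) y
    simp only [LinearMap.sub_apply, Module.End.mul_apply] at h
    linear_combination (norm := module) h
  · have h := LinearMap.congr_fun (hLR (T z) (T x)) y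
    simp only [LinearMap.sub_apply, Module.End.mul_apply] at h
    linear_combination (norm := module) h
  · simp [hR]
  · simp [hL]

end AlOperator

section YangBaxter

variable {A : Type v} [AddCommGroup A] [Module k A]

open Module

@[simp]
lemma Tr_tmul (x y : A) (f : Dual k A) : Tr (x ⊗ₜ[k] y) f = f y • x := rfl

lemma apply_Tr_comm (r : A ⊗[k] A) (f g : Dual k A) :
    f (Tr (TensorProduct.comm k A A r) g) = g (Tr r f) := by
  induction r using TensorProduct.induction_on with
  | zero => simp
  | tmul x y => simp [mul_comm]
  | add r r' hr hr' => simp [hr, hr']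

lemma apply_Tr_of_comm_eq_neg {r : A ⊗[k] A} (hskew : TensorProduct.comm k A A r = -r)
    (f g : Dual k A) :
    f (Tr r g) = -g (Tr r f) := by
  rw [← apply_Tr_comm, hskew]
  simp

lemma dualDistrib₃_comp12_13 (m : A →ₗ[k] A →ₗ[k] A) (r r' : A ⊗[k] A) (f g h : Dual k A) :
    dualDistrib₃ f g h (comp12_13 m (r ⊗ₜ r')) = f (m (Tr r g) (Tr r' h)) := by
  induction r using TensorProduct.induction_on with
  | zero => simp
  | add r₁ r₂ h₁ h₂ => simp [add_tmul, h₁, h₂]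
  | tmul x y =>
    induction r' using TensorProduct.induction_on with
    | zero => simp
    | add r₁ r₂ h₁ h₂ => simp [tmul_add, h₁, h₂]
    | tmul z w =>
      simp only [comp12_13, tlift, LinearMap.comp_apply, LinearEquiv.coe_coe, map_tmul,
        lift.tmul, tensorTensorTensorComm_tmul, LinearMap.id_coe, id_eq, dualDistrib₃_tmul_tmul,
        Tr_tmul, map_smul, LinearMap.smul_apply, smul_eq_mul]
      ring

lemma dualDistrib₃_comp23_12 (m : A →ₗ[k] A →ₗ[k] A) (r r' : A ⊗[k] A) (f g h : Dual k A) :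
    dualDistrib₃ f g h (comp23_12 m (r ⊗ₜ r')) =
      g (m (Tr r h) (Tr (TensorProduct.comm k A A r') f)) := by
  induction r using TensorProduct.induction_on with
  | zero => simp
  | add r₁ r₂ h₁ h₂ => simp [add_tmul, h₁, h₂]
  | tmul x y =>
    induction r' using TensorProduct.induction_on with
    | zero => simp
    | add r₁ r₂ h₁ h₂ => simp [tmul_add, h₁, h₂]
    | tmul z w =>
      simp only [comp23_12, tlift, LinearMap.comp_apply, LinearEquiv.coe_coe, map_tmul,
        lift.tmul, assoc_tmul, assoc_symm_tmul, comm_tmul, LinearMap.id_coe, id_eq,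
        LinearMap.flip_apply, dualDistrib₃_tmul_tmul, Tr_tmul, map_smul, LinearMap.smul_apply,
        smul_eq_mul]
      ring

lemma dualDistrib₃_comp13_23 (m : A →ₗ[k] A →ₗ[k] A) (r r' : A ⊗[k] A) (f g h : Dual k A) :
    dualDistrib₃ f g h (comp13_23 m (r ⊗ₜ r')) =
      h (m (Tr (TensorProduct.comm k A A r) f) (Tr (TensorProduct.comm k A A r') g)) := by
  induction r using TensorProduct.induction_on with
  | zero => simp
  | add r₁ r₂ h₁ h₂ => simp [add_tmul, h₁, h₂]
  | tmul x y =>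
    induction r' using TensorProduct.induction_on with
    | zero => simp
    | add r₁ r₂ h₁ h₂ => simp [tmul_add, h₁, h₂]
    | tmul z w =>
      simp only [comp13_23, tlift, LinearMap.comp_apply, LinearEquiv.coe_coe, map_tmul,
        lift.tmul, tensorTensorTensorComm_tmul, assoc_tmul, comm_tmul, LinearMap.id_coe, id_eq,
        dualDistrib₃_tmul_tmul, Tr_tmul, map_smul, LinearMap.smul_apply, smul_eq_mul]
      ring

lemma dualDistrib₃_ayb {r : A ⊗[k] A} (hskew : TensorProduct.comm k A A r = -r)
    (m : A →ₗ[k] A →ₗ[k] A) (f g h : Dual k A) :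
    dualDistrib₃ f g h (ayb m r) =
      -(g (m (Tr r h) (Tr r f)) + f (m (Tr r g) (Tr r h)) + h (m (Tr r f) (Tr r g))) := by
  simp only [ayb, map_sub, dualDistrib₃_comp23_12, dualDistrib₃_comp12_13,
    dualDistrib₃_comp13_23, hskew, map_neg, LinearMap.neg_apply]
  ring

lemma apply_Tr_dualT_flip_add_dualT {r : A ⊗[k] A} (hskew : TensorProduct.comm k A A r = -r)
    (m : A →ₗ[k] A →ₗ[k] A) (a b c : Dual k A) :
    c (Tr r (dualT m.flip (Tr r a) b + dualT m (Tr r b) a)) =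
      -(b (m (Tr r c) (Tr r a)) + a (m (Tr r b) (Tr r c))) := by
  rw [apply_Tr_of_comm_eq_neg hskew c]
  simp

theorem ayb_eq_zero_iff_isAlOperator {r : A ⊗[k] A} (hskew : TensorProduct.comm k A A r = -r)
    (m : A →ₗ[k] A →ₗ[k] A) :
    ayb m r = 0 ↔ IsAlOperator m (dualT m.flip) (dualT m) (Tr r) := by
  constructor
  · intro hayb a b
    rw [← sub_eq_zero, ← forall_dual_apply_eq_zero_iff k]
    intro c
    have h := dualDistrib₃_ayb hskew m a b c
    rw [hayb, map_zero] at h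
    rw [map_sub, apply_Tr_dualT_flip_add_dualT hskew]
    linear_combination h
  · intro hT
    refine eq_zero_of_forall_dualDistrib₃_eq_zero fun a b c => ?_
    have h := congrArg c (hT a b)
    rw [apply_Tr_dualT_flip_add_dualT hskew] at h
    rw [dualDistrib₃_ayb hskew]
    linear_combination -h

end YangBaxter

theorem stmt7_general {A : Type v} [AddCommGroup A] [Module k A]
    (m : A →ₗ[k] A →ₗ[k] A) (halt : IsAlt m)
    (r : A ⊗[k] A) (hskew : TensorProduct.comm k A A r = -r) :
    (ayb m r = 0 ↔
      ∀ a b : Module.Dual k A,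
        m (Tr r a) (Tr r b) = Tr r (dualT m.flip (Tr r a) b + dualT m (Tr r b) a)) ∧
    (ayb m r = 0 →
      IsPreAlt (((dualT m ∘ₗ Tr r :
            Module.Dual k A →ₗ[k] Module.End k (Module.Dual k A)) :
          Module.Dual k A →ₗ[k] Module.Dual k A →ₗ[k] Module.Dual k A).flip)
        ((dualT m.flip ∘ₗ Tr r :
            Module.Dual k A →ₗ[k] Module.End k (Module.Dual k A)) :
          Module.Dual k A →ₗ[k] Module.Dual k A →ₗ[k] Module.Dual k A)) :=
  ⟨ayb_eq_zero_iff_isAlOperator hskew m, fun hayb =>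
    halt.isAltBimod_dual.isPreAlt_of_isAlOperator
      ((ayb_eq_zero_iff_isAlOperator hskew m).1 hayb)⟩

theorem stmt7 {A : Type v} [AddCommGroup A] [Module k A] [FiniteDimensional k A]
    (hchar : (2 : k) ≠ 0) (m : A →ₗ[k] A →ₗ[k] A) (halt : IsAlt m)
    (r : A ⊗[k] A) (hskew : TensorProduct.comm k A A r = -r) :
    (ayb m r = 0 ↔
      ∀ a b : Module.Dual k A,
        m (Tr r a) (Tr r b) = Tr r (dualT m.flip (Tr r a) b + dualT m (Tr r b) a)) ∧
    (ayb m r = 0 →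
      IsPreAlt (((dualT m ∘ₗ Tr r :
            Module.Dual k A →ₗ[k] Module.End k (Module.Dual k A)) :
          Module.Dual k A →ₗ[k] Module.Dual k A →ₗ[k] Module.Dual k A).flip)
        ((dualT m.flip ∘ₗ Tr r :
            Module.Dual k A →ₗ[k] Module.End k (Module.Dual k A)) :
          Module.Dual k A →ₗ[k] Module.Dual k A →ₗ[k] Module.Dual k A)) :=
  stmt7_general m halt r hskew
end

section
/- Let (A,∘,ω) be a finite-dimensional alternative algebra over a field of characteristic ≠ 2 with a symplectic form ω, and suppose A is the direct sum A = A⁺ ⊕ A⁻ of two Lagrangian subalgebras A⁺ and A⁻ with respect to ω (an L-symplectic alternative algebra). Let ≺,≻ be the compatible pre-alternative products determined by ω(x≺y, z) = ω(x, y∘z) and ω(x≻y, z) = ω(y, z∘x). Then A⁺ and A⁻ are closed under both ≺ and ≻, i.e., they are pre-alternative subalgebras of (A,≺,≻). -/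
open TensorProduct

universe u v w

variable {k : Type u} [Field k]

theorem stmt12 {A : Type v} [AddCommGroup A] [Module k A] [FiniteDimensional k A]
    (hchar : (2 : k) ≠ 0) (m : A →ₗ[k] A →ₗ[k] A) (halt : IsAlt m)
    (ω : A →ₗ[k] A →ₗ[k] k)
    (hskew : ∀ x y, ω x y = - ω y x)
    (hnondeg : ∀ x, (∀ y, ω x y = 0) → x = 0)
    (hclosed : ∀ x y z, ω (m x y) z + ω (m y z) x + ω (m z x) y = 0)
    (Ap An : Submodule k A) (hcompl : IsCompl Ap An)
    (hLp : ∀ x : A, x ∈ Ap ↔ ∀ y ∈ Ap, ω x y = 0)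
    (hLn : ∀ x : A, x ∈ An ↔ ∀ y ∈ An, ω x y = 0)
    (hsubp : ∀ x ∈ Ap, ∀ y ∈ Ap, m x y ∈ Ap)
    (hsubn : ∀ x ∈ An, ∀ y ∈ An, m x y ∈ An)
    (p s : A →ₗ[k] A →ₗ[k] A)
    (hp : ∀ x y z, ω (p x y) z = ω x (m y z))
    (hs : ∀ x y z, ω (s x y) z = ω y (m z x)) :
    (∀ x ∈ Ap, ∀ y ∈ Ap, p x y ∈ Ap ∧ s x y ∈ Ap) ∧
    (∀ x ∈ An, ∀ y ∈ An, p x y ∈ An ∧ s x y ∈ An) := by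
  constructor
  · intro x hx y hy
    constructor
    · rw [hLp]
      intro z hz
      rw [hp]
      exact (hLp x).mp hx _ (hsubp y hy z hz)
    · rw [hLp]
      intro z hz
      rw [hs]
      exact (hLp y).mp hy _ (hsubp z hz x hx)
  · intro x hx y hy
    constructor
    · rw [hLn]
      intro z hz
      rw [hp]
      exact (hLn x).mp hx _ (hsubn y hy z hz)
    · rw [hLn]
      intro z hz
      rw [hs]
      exact (hLn y).mp hy _ (hsubn z hz x hx)
end
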